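/- arXiv:1605.01887 — 2 statements merged into one kernel-verified Lean document; each statement's English description precedes it below -/
import Mathlib

section
/- Suppose that for constants c₆, c₇, M > 0, a set A_T ⊆ [T/2, T], a bounded function α : S → [0, M) on an unbounded set S of positive reals, and an increasing positive function h₀, we have for all T ∈ S: (i) ∫_{A_T} Δ(x)²/x^{2α(T)+1} dx > c₆, (ii) μ(A_T) < c₇ h₀(T), and (iii) x ↦ x^{α(T)+1/2} h₀(x)^{−1/2} is monotonically increasing on [T/2, T]. Then, with c₈ = sqrt(c₆ / (2^{2M+1} c₇)), for every sufficiently large T ∈ S there exists x ∈ [T/2, T] with |Δ(x)| > c₈ x^{α(T)+1/2} h₀(x)^{−1/2}. -/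
open MeasureTheory Set Real

/-- Refining an Ω-result from a measure bound. -/
theorem stmt_7 (Δ : ℝ → ℝ) (hΔ : Measurable Δ)
    (S : Set ℝ) (hSpos : ∀ T ∈ S, 0 < T) (hSunb : ∀ M₀ : ℝ, ∃ T ∈ S, M₀ < T)
    (α : ℝ → ℝ) (M c₅ c₆ c₇ : ℝ) (hM : 0 < M) (hc₅ : 0 < c₅) (hc₆ : 0 < c₆) (hc₇ : 0 < c₇)
    (hα : ∀ T ∈ S, 0 ≤ α T ∧ α T < M)
    (h₀ : ℝ → ℝ) (h₀pos : ∀ x : ℝ, 0 < h₀ x) (h₀mono : Monotone h₀)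
    (A : ℝ → Set ℝ)
    (hAdef : ∀ T : ℝ, A T = {x ∈ Icc (T / 2) T | c₅ * x ^ α x < |Δ x|})
    (hi : ∀ T ∈ S, c₆ < ∫ x in A T, Δ x ^ 2 / x ^ (2 * α T + 1))
    (hii : ∀ T ∈ S, (volume (A T)).toReal < c₇ * h₀ T)
    (hiii : ∀ T ∈ S,
      MonotoneOn (fun x : ℝ => x ^ (α T + 1 / 2) * h₀ x ^ (-(1 / 2 : ℝ))) (Icc (T / 2) T))
    (c₈ : ℝ) (hc₈ : c₈ = Real.sqrt (c₆ / (2 ^ (2 * M + 1) * c₇))) :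
    ∃ T₁ : ℝ, ∀ T ∈ S, T₁ ≤ T →
      ∃ x ∈ Icc (T / 2) T, c₈ * x ^ (α T + 1 / 2) * h₀ x ^ (-(1 / 2 : ℝ)) < |Δ x| := by
  refine ⟨0, fun T hT _ => ?_⟩
  by_contra hcon
  push_neg at hcon
  have hTpos : 0 < T := hSpos T hT
  have ha := hα T hT
  have h2M : (0:ℝ) < 2 ^ (2 * M + 1) := Real.rpow_pos_of_pos (by norm_num) _
  have hc₈pos : 0 < c₈ := by
    rw [hc₈]; exact Real.sqrt_pos.2 (by positivity)
  have hc₈sq : c₈ ^ 2 = c₆ / (2 ^ (2 * M + 1) * c₇) := by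
    rw [hc₈, sq_sqrt (by positivity)]
  set a := α T with haT
  set e := 2 * a + 1 with he
  set C := c₈ ^ 2 * 2 ^ (2 * M + 1) / h₀ T with hC
  have hCpos : 0 < C := div_pos (mul_pos (pow_pos hc₈pos 2) h2M) (h₀pos T)
  -- pointwise bound on A T
  have key : ∀ x ∈ A T, ‖Δ x ^ 2 / x ^ e‖ ≤ C := by
    intro x hx
    rw [hAdef] at hx
    obtain ⟨hxI, -⟩ := hx
    have hx0 : 0 < x := lt_of_lt_of_le (half_pos hTpos) hxI.1
    have hxe : (0:ℝ) < x ^ e := Real.rpow_pos_of_pos hx0 _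
    have hb : |Δ x| ≤ c₈ * x ^ (a + 1 / 2) * h₀ x ^ (-(1 / 2 : ℝ)) := hcon x hxI
    have hmono : x ^ (a + 1 / 2) * h₀ x ^ (-(1 / 2 : ℝ))
        ≤ T ^ (a + 1 / 2) * h₀ T ^ (-(1 / 2 : ℝ)) :=
      hiii T hT hxI ⟨by linarith [hxI.1, hxI.2], le_refl T⟩ hxI.2
    have hb2 : |Δ x| ≤ c₈ * (T ^ (a + 1 / 2) * h₀ T ^ (-(1 / 2 : ℝ))) := by
      refine hb.trans ?_
      rw [mul_assoc]
      exact mul_le_mul_of_nonneg_left hmono hc₈pos.le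
    have hsq : Δ x ^ 2 ≤ (c₈ * (T ^ (a + 1 / 2) * h₀ T ^ (-(1 / 2 : ℝ)))) ^ 2 := by
      rw [← sq_abs]
      exact pow_le_pow_left₀ (abs_nonneg _) hb2 2
    have hT2 : (T ^ (a + 1 / 2)) ^ 2 = T ^ e := by
      rw [sq, ← Real.rpow_add hTpos, he]; ring_nf
    have hh2 : (h₀ T ^ (-(1 / 2 : ℝ))) ^ 2 = (h₀ T)⁻¹ := by
      rw [sq, ← Real.rpow_add (h₀pos T)]
      norm_num
      exact (Real.rpow_neg_one _)
    have hsq2 : Δ x ^ 2 ≤ c₈ ^ 2 * T ^ e * (h₀ T)⁻¹ := by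
      calc Δ x ^ 2 ≤ (c₈ * (T ^ (a + 1 / 2) * h₀ T ^ (-(1 / 2 : ℝ)))) ^ 2 := hsq
        _ = c₈ ^ 2 * (T ^ (a + 1 / 2)) ^ 2 * (h₀ T ^ (-(1 / 2 : ℝ))) ^ 2 := by ring
        _ = c₈ ^ 2 * T ^ e * (h₀ T)⁻¹ := by rw [hT2, hh2]
    have hTe : T ^ e ≤ 2 ^ (2 * M + 1) * x ^ e := by
      have h1 : T ^ e ≤ (2 * x) ^ e := by
        refine Real.rpow_le_rpow hTpos.le (by linarith [hxI.1]) (by simp [he]; linarith [ha.1])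
      have h2 : (2 * x : ℝ) ^ e = 2 ^ e * x ^ e := Real.mul_rpow (by norm_num) hx0.le
      have h3 : (2:ℝ) ^ e ≤ 2 ^ (2 * M + 1) :=
        Real.rpow_le_rpow_of_exponent_le (by norm_num) (by simp [he]; linarith [ha.2])
      calc T ^ e ≤ 2 ^ e * x ^ e := h1.trans_eq h2
        _ ≤ 2 ^ (2 * M + 1) * x ^ e := mul_le_mul_of_nonneg_right h3 hxe.le
    have hfinal : Δ x ^ 2 ≤ C * x ^ e := by
      calc Δ x ^ 2 ≤ c₈ ^ 2 * T ^ e * (h₀ T)⁻¹ := hsq2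
        _ ≤ c₈ ^ 2 * (2 ^ (2 * M + 1) * x ^ e) * (h₀ T)⁻¹ := by
            refine mul_le_mul_of_nonneg_right (mul_le_mul_of_nonneg_left hTe (by positivity)) ?_
            exact inv_nonneg.2 (h₀pos T).le
        _ = C * x ^ e := by rw [hC]; ring
    rw [Real.norm_eq_abs, abs_of_nonneg (div_nonneg (sq_nonneg _) hxe.le)]
    exact (div_le_iff₀ hxe).2 hfinal
  have hμ : volume (A T) < ⊤ := by
    refine lt_of_le_of_lt (measure_mono ?_) (measure_Icc_lt_top (a := T / 2) (b := T))
    rw [hAdef]; exact fun x hx => hx.1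
  have hmeas : AEStronglyMeasurable (fun x => Δ x ^ 2 / x ^ e) (volume.restrict (A T)) := by
    refine Measurable.aestronglyMeasurable ?_
    exact (hΔ.pow_const 2).div (by fun_prop)
  have hint : ∫ x in A T, Δ x ^ 2 / x ^ e ≤ C * (volume (A T)).toReal := by
    calc ∫ x in A T, Δ x ^ 2 / x ^ e ≤ ‖∫ x in A T, Δ x ^ 2 / x ^ e‖ :=
        le_abs_self _
      _ ≤ C * (volume (A T)).toReal :=
        norm_setIntegral_le_of_norm_le_const hμ key
  have hlt : C * (volume (A T)).toReal < C * (c₇ * h₀ T) :=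
    mul_lt_mul_of_pos_left (hii T hT) hCpos
  have heq : C * (c₇ * h₀ T) = c₆ := by
    calc C * (c₇ * h₀ T)
        = c₈ ^ 2 * (2 ^ (2 * M + 1) * c₇) * (h₀ T / h₀ T) := by rw [hC]; ring
      _ = c₈ ^ 2 * (2 ^ (2 * M + 1) * c₇) := by rw [div_self (h₀pos T).ne', mul_one]
      _ = c₆ := by rw [hc₈sq]; exact div_mul_cancel₀ _ (by positivity)
  have := (hi T hT).trans_le hint
  linarith
end

section
/- Fix θ ≠ 0 real, 0 < α < 1/2 with 2α > 0, and y > 0. For T ≤ T₀ ≤ 2T and s = α + it, define S(t) = Σ_{n ≤ T₀} |τ(n, θ)|² n^{−s} e^{−n/y}, where τ(n,θ) = Σ_{d|n} d^{iθ}. Then ∫_T^{2T} |S(t)|² t^{−2} dt ≪ 1, with implied constant independent of T. -/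
open MeasureTheory Complex

/-- The twisted divisor function `τ(n, θ) = ∑_{d ∣ n} d^{iθ}`. -/
noncomputable def tau (n : ℕ) (θ : ℝ) : ℂ :=
  ∑ d ∈ n.divisors, (d : ℂ) ^ (Complex.I * θ)

lemma tau_abs_le (n : ℕ) (θ : ℝ) : ‖tau n θ‖ ≤ n := by
  have h1 : ‖tau n θ‖ ≤ ∑ d ∈ n.divisors, ‖(d : ℂ) ^ (Complex.I * θ)‖ := by
    exact norm_sum_le _ _
  have h2 : ∀ d ∈ n.divisors, ‖(d : ℂ) ^ (Complex.I * θ)‖ = 1 := by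
    intro d hd
    have hd0 : 0 < d := Nat.pos_of_mem_divisors hd
    have hdd : (d : ℂ) = ((d : ℝ) : ℂ) := by push_cast; ring
    rw [hdd, Complex.norm_cpow_eq_rpow_re_of_pos (by exact_mod_cast hd0)]
    simp
  rw [Finset.sum_congr rfl h2] at h1
  simp only [Finset.sum_const, nsmul_eq_mul, mul_one] at h1
  calc ‖tau n θ‖ ≤ (n.divisors.card : ℝ) := h1
    _ ≤ n := by
        have hsub : n.divisors ⊆ Finset.Icc 1 n := fun d hd =>
          Finset.mem_Icc.mpr ⟨Nat.pos_of_mem_divisors hd, Nat.divisor_le hd⟩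
        have hc := Finset.card_le_card hsub
        simp [Nat.card_Icc] at hc
        exact_mod_cast hc

/-- Mean value estimate for the truncated Dirichlet series of `|τ(n,θ)|²`. -/
theorem stmt_10 (θ α y : ℝ) (hθ : θ ≠ 0) (hα0 : 0 < α) (hα1 : α < 1 / 2) (hy : 0 < y) :
    ∃ C : ℝ, ∀ T : ℝ, 1 ≤ T → ∀ T₀ : ℝ, T ≤ T₀ → T₀ ≤ 2 * T →
      (∫ t in T..(2 * T),
        ‖∑ n ∈ Finset.Icc 1 ⌊T₀⌋₊,
            ((‖tau n θ‖ : ℝ) : ℂ) ^ 2 * (n : ℂ) ^ (-((α : ℂ) + t * Complex.I)) *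
              (Real.exp (-(n : ℝ) / y) : ℂ)‖ ^ 2 / t ^ 2) ≤ C := by
  set r : ℝ := Real.exp (-1 / y) with hr
  have hr0 : 0 ≤ r := Real.exp_nonneg _
  have hr1 : r < 1 := by
    rw [hr, Real.exp_lt_one_iff]
    exact div_neg_of_neg_of_pos (by norm_num) hy
  have hsum : Summable (fun n : ℕ => (n : ℝ) ^ 2 * r ^ n) :=
    summable_pow_mul_geometric_of_norm_lt_one 2
      (by rwa [Real.norm_eq_abs, _root_.abs_of_nonneg hr0])
  set M : ℝ := ∑' n : ℕ, (n : ℝ) ^ 2 * r ^ n with hMdef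
  have hM0 : 0 ≤ M := tsum_nonneg fun n => by positivity
  refine ⟨M ^ 2, ?_⟩
  intro T hT T₀ hTT₀ hT₀
  have hT0 : (0:ℝ) < T := lt_of_lt_of_le one_pos hT
  -- per-term bound
  have hterm : ∀ (t : ℝ) (n : ℕ), n ∈ Finset.Icc 1 ⌊T₀⌋₊ →
      ‖((‖tau n θ‖ : ℝ) : ℂ) ^ 2 * (n : ℂ) ^ (-((α : ℂ) + t * Complex.I)) *
        (Real.exp (-(n : ℝ) / y) : ℂ)‖ ≤ (n : ℝ) ^ 2 * r ^ n := by
    intro t n hn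
    have hn1 : 1 ≤ n := (Finset.mem_Icc.mp hn).1
    have hn0 : (0:ℝ) < n := by exact_mod_cast hn1
    rw [norm_mul, norm_mul]
    have e1 : ‖((‖tau n θ‖ : ℝ) : ℂ) ^ 2‖ ≤ (n : ℝ) ^ 2 := by
      rw [norm_pow, Complex.norm_real, Real.norm_eq_abs,
        _root_.abs_of_nonneg (norm_nonneg _)]
      exact pow_le_pow_left₀ (norm_nonneg _) (tau_abs_le n θ) 2
    have e2 : ‖(n : ℂ) ^ (-((α : ℂ) + t * Complex.I))‖ ≤ 1 := by
      have hdd : (n : ℂ) = ((n : ℝ) : ℂ) := by push_cast; ring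
      rw [hdd, Complex.norm_cpow_eq_rpow_re_of_pos hn0]
      have hre : (-((α : ℂ) + t * Complex.I)).re = -α := by simp
      rw [hre]
      exact Real.rpow_le_one_of_one_le_of_nonpos (by exact_mod_cast hn1) (by linarith)
    have e3 : ‖((Real.exp (-(n : ℝ) / y) : ℝ) : ℂ)‖ = r ^ n := by
      rw [Complex.norm_real, Real.norm_eq_abs, _root_.abs_of_nonneg (Real.exp_nonneg _)]
      rw [hr, ← Real.exp_nat_mul]
      congr 1
      field_simp
    calc ‖((‖tau n θ‖ : ℝ) : ℂ) ^ 2‖ * ‖(n : ℂ) ^ (-((α : ℂ) + t * Complex.I))‖ *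
          ‖((Real.exp (-(n : ℝ) / y) : ℝ) : ℂ)‖
        ≤ (n : ℝ) ^ 2 * 1 * r ^ n := by
          rw [e3]
          exact mul_le_mul (mul_le_mul e1 e2 (norm_nonneg _) (by positivity))
            le_rfl (by positivity) (by positivity)
      _ = (n : ℝ) ^ 2 * r ^ n := by ring
  -- the sum is uniformly bounded by M
  have hS : ∀ t : ℝ, ‖∑ n ∈ Finset.Icc 1 ⌊T₀⌋₊,
      ((‖tau n θ‖ : ℝ) : ℂ) ^ 2 * (n : ℂ) ^ (-((α : ℂ) + t * Complex.I)) *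
        (Real.exp (-(n : ℝ) / y) : ℂ)‖ ≤ M := by
    intro t
    calc ‖∑ n ∈ Finset.Icc 1 ⌊T₀⌋₊, _‖
        ≤ ∑ n ∈ Finset.Icc 1 ⌊T₀⌋₊,
            ‖((‖tau n θ‖ : ℝ) : ℂ) ^ 2 * (n : ℂ) ^ (-((α : ℂ) + t * Complex.I)) *
              (Real.exp (-(n : ℝ) / y) : ℂ)‖ := norm_sum_le _ _
      _ ≤ ∑ n ∈ Finset.Icc 1 ⌊T₀⌋₊, (n : ℝ) ^ 2 * r ^ n :=
          Finset.sum_le_sum (fun n hn => hterm t n hn)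
      _ ≤ M := hsum.sum_le_tsum _ (fun n _ => by positivity)
  -- bound the integral
  have hnorm : ‖∫ t in T..(2 * T),
      ‖∑ n ∈ Finset.Icc 1 ⌊T₀⌋₊,
          ((‖tau n θ‖ : ℝ) : ℂ) ^ 2 * (n : ℂ) ^ (-((α : ℂ) + t * Complex.I)) *
            (Real.exp (-(n : ℝ) / y) : ℂ)‖ ^ 2 / t ^ 2‖ ≤ M ^ 2 / T ^ 2 * |2 * T - T| := by
    apply intervalIntegral.norm_integral_le_of_norm_le_const
    intro t ht
    rw [Set.uIoc_of_le (by linarith)] at ht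
    have htT : T < t := ht.1
    have ht0 : (0:ℝ) < t := hT0.trans htT
    rw [Real.norm_eq_abs, _root_.abs_of_nonneg (by positivity)]
    apply div_le_div₀ (by positivity) _ (by positivity) _
    · exact pow_le_pow_left₀ (norm_nonneg _) (hS t) 2
    · exact pow_le_pow_left₀ hT0.le htT.le 2
  have habs : |2 * T - T| = T := by rw [_root_.abs_of_nonneg (by linarith)]; ring
  rw [habs] at hnorm
  calc (∫ t in T..(2 * T), _) ≤ |∫ t in T..(2 * T),
        ‖∑ n ∈ Finset.Icc 1 ⌊T₀⌋₊,
            ((‖tau n θ‖ : ℝ) : ℂ) ^ 2 * (n : ℂ) ^ (-((α : ℂ) + t * Complex.I)) *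
              (Real.exp (-(n : ℝ) / y) : ℂ)‖ ^ 2 / t ^ 2| := le_abs_self _
    _ ≤ M ^ 2 / T ^ 2 * T := hnorm
    _ ≤ M ^ 2 := by
        have h1 : M ^ 2 / T ^ 2 * T ≤ M ^ 2 / T ^ 2 * T ^ 2 := by
          apply mul_le_mul_of_nonneg_left _ (by positivity)
          nlinarith
        have h2 : M ^ 2 / T ^ 2 * T ^ 2 = M ^ 2 := by field_simp
        linarith
end
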